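/- Let A ∈ ℂ^{n×n×n3} and suppose A = U *_c [[S_r *_c K, S_r *_c L],[O, O]] *_c U^H, where U ∈ ℂ^{n×n×n3} is unitary, S_r ∈ ℂ^{r×r×n3} is invertible, K ∈ ℂ^{r×r×n3}, L ∈ ℂ^{r×(n−r)×n3}, and K *_c K^H + L *_c L^H = I_r (the identity tensor in ℂ^{r×r×n3}) — a C-HS decomposition of A. Then the Moore-Penrose inverse of A is A^† = U *_c [[K^H *_c S_r^{-1}, O],[L^H *_c S_r^{-1}, O]] *_c U^H. -/

import Mathlib

/-!
`mat(A)` is the compression of a block circulant matrix to the vectors on `ZMod (2 * n3)` that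
are symmetric under `u ↦ -1 - u`: its `(t, q)` block is `h (t - q) + h (t + q + 1)`, where the
even kernel `h` folds the slices of `A` and vanishes at `n3`. Compressions of even circulants
multiply like circular convolutions, and an even kernel becomes the kernel of a tensor after
subtracting a multiple of the alternating kernel, whose compression is zero. So `mat` is an
injective `*`-homomorphism for the C-product, and the Penrose equations become matrix
identities: they survive conjugation by the isometry `mat(U)` and reindexing, and for the
blocks `[[S K, S L], [0, 0]]` and `[[Kᴴ S⁻¹, 0], [Lᴴ S⁻¹, 0]]` they follow from
`K Kᴴ + L Lᴴ = 1`.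
-/

noncomputable section

/-- A third-order tensor: a family of frontal slices. -/
abbrev Tensor (n1 n2 n3 : ℕ) : Type := Fin n3 → Matrix (Fin n1) (Fin n2) ℂ

namespace Tensor

/-- The block Toeplitz-plus-Hankel matrix `mat(A)` associated to a tensor. -/
def matT {n1 n2 n3 : ℕ} (A : Tensor n1 n2 n3) :
    Matrix (Fin n3 × Fin n1) (Fin n3 × Fin n2) ℂ := fun p q =>
  A ⟨p.1.1 - q.1.1 + (q.1.1 - p.1.1), by
        have h1 := p.1.isLt; have h2 := q.1.isLt; omega⟩ p.2 q.2 +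
    (if h : p.1.1 + q.1.1 + 2 ≤ n3 then A ⟨p.1.1 + q.1.1 + 1, by omega⟩ p.2 q.2
     else if h2 : n3 ≤ p.1.1 + q.1.1 then
       A ⟨2 * n3 - (p.1.1 + q.1.1) - 1, by have h1 := p.1.isLt; omega⟩ p.2 q.2
     else 0)

/-- `ten`, the inverse of `mat` on its range: the slices of a tensor are recovered
from the first block-column of its `mat` by an alternating sum. -/
def tenT {n1 n2 n3 : ℕ} (M : Matrix (Fin n3 × Fin n1) (Fin n3 × Fin n2) ℂ) :
    Tensor n1 n2 n3 := fun i => Matrix.of fun a b =>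
  ∑ t : Fin n3, if i.1 ≤ t.1 then (-1 : ℂ) ^ (t.1 - i.1) * M (t, a) (⟨0, i.pos⟩, b) else 0

/-- The C-product of two tensors: the unique tensor whose `mat` is `mat(A) * mat(B)`. -/
def cmul {n1 n2 l n3 : ℕ} (A : Tensor n1 n2 n3) (B : Tensor n2 l n3) : Tensor n1 l n3 :=
  tenT (matT A * matT B)

/-- The conjugate transpose of a tensor, taken slice-wise. -/
def conjT {n1 n2 n3 : ℕ} (A : Tensor n1 n2 n3) : Tensor n2 n1 n3 := fun i => (A i).conjTranspose

/-- The identity tensor: the tensor whose `mat` is the identity matrix. -/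
def idT {n n3 : ℕ} : Tensor n n n3 := fun i => if i.1 = 0 then 1 else 0

/-- A tensor is unitary if `Qᴴ *c Q = Q *c Qᴴ = I`. -/
def Unitary {n n3 : ℕ} (Q : Tensor n n n3) : Prop :=
  cmul (conjT Q) Q = idT ∧ cmul Q (conjT Q) = idT

/-- `X` is the inverse of the square tensor `B` under the C-product. -/
def IsInverse {n n3 : ℕ} (B X : Tensor n n n3) : Prop :=
  cmul B X = idT ∧ cmul X B = idT

/-- `X` is the Moore-Penrose inverse of `A` under the C-product. -/
def IsMP {n1 n2 n3 : ℕ} (A : Tensor n1 n2 n3) (X : Tensor n2 n1 n3) : Prop :=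
  cmul (cmul A X) A = A ∧ cmul (cmul X A) X = X ∧
    conjT (cmul A X) = cmul A X ∧ conjT (cmul X A) = cmul X A

/-- Powers of a square tensor with respect to the C-product. -/
def cpow {n n3 : ℕ} (A : Tensor n n n3) : ℕ → Tensor n n n3
  | 0 => idT
  | m + 1 => cmul (cpow A m) A

/-- `ind(A) = k`: `k` is the smallest nonnegative integer with
`rank(mat(A)^k) = rank(mat(A)^(k+1))`. -/
def IsIndex {n n3 : ℕ} (A : Tensor n n n3) (k : ℕ) : Prop :=
  (matT A ^ k).rank = (matT A ^ (k + 1)).rank ∧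
    ∀ j < k, (matT A ^ j).rank ≠ (matT A ^ (j + 1)).rank

/-- `X` is the Drazin inverse of `A` (of index `k`) under the C-product. -/
def IsDrazin {n n3 : ℕ} (A : Tensor n n n3) (k : ℕ) (X : Tensor n n n3) : Prop :=
  cmul (cpow A (k + 1)) X = cpow A k ∧ cmul (cmul X A) X = X ∧ cmul A X = cmul X A

/-- `X` is an inverse of `A` along `G` under the C-product. -/
def IsInvAlong {n1 n2 n3 : ℕ} (A : Tensor n1 n2 n3) (G X : Tensor n2 n1 n3) : Prop :=
  cmul (cmul X A) G = G ∧ cmul (cmul G A) X = G ∧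
    (∃ U : Tensor n1 n1 n3, X = cmul G U) ∧
    (∃ V : Tensor n2 n2 n3, conjT X = cmul (conjT G) V)

/-- All frontal slices are diagonal. -/
def FDiag {n1 n2 n3 : ℕ} (A : Tensor n1 n2 n3) : Prop :=
  ∀ (i : Fin n3) (a : Fin n1) (b : Fin n2), (a : ℕ) ≠ (b : ℕ) → A i a b = 0

/-- All frontal slices are upper triangular. -/
def FUpper {n1 n2 n3 : ℕ} (A : Tensor n1 n2 n3) : Prop :=
  ∀ (i : Fin n3) (a : Fin n1) (b : Fin n2), (b : ℕ) < (a : ℕ) → A i a b = 0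

/-- All frontal slices are lower triangular. -/
def FLower {n1 n2 n3 : ℕ} (A : Tensor n1 n2 n3) : Prop :=
  ∀ (i : Fin n3) (a : Fin n1) (b : Fin n2), (a : ℕ) < (b : ℕ) → A i a b = 0

/-- Slice-wise 2×2 block tensor `[[A, B],[C, D]]`. -/
def blockT {r s t u n3 : ℕ} (A : Tensor r t n3) (B : Tensor r u n3)
    (C : Tensor s t n3) (D : Tensor s u n3) : Tensor (r + s) (t + u) n3 := fun i =>
  Matrix.reindex finSumFinEquiv finSumFinEquiv (Matrix.fromBlocks (A i) (B i) (C i) (D i))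

/-- The mode-3 product of a tensor with an `n3 × n3` matrix. -/
def mode3 {n1 n2 n3 : ℕ} (A : Tensor n1 n2 n3) (M : Matrix (Fin n3) (Fin n3) ℂ) :
    Tensor n1 n2 n3 := fun l => ∑ i, M l i • A i

end Tensor

lemma neg_one_pow_eq_neg_of_odd_add {R : Type*} [Monoid R] [HasDistribNeg R] {a b : ℕ}
    (h : (a + b) % 2 = 1) :
    (-1 : R) ^ a = -(-1) ^ b := by
  rw [neg_one_pow_congr (n := b + 1) (by simp only [Nat.even_iff]; omega), pow_succ, mul_neg_one]

namespace ZMod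

lemma sum_two_mul_eq_sum_fin {n3 : ℕ} [NeZero n3] {M : Type*} [AddCommMonoid M]
    (F : ZMod (2 * n3) → M) :
    ∑ x, F x = ∑ u : Fin n3, (F u + F (-1 - u)) := by
  have hrange : ∑ x, F x = ∑ i ∈ Finset.range (n3 + n3), F i := by
    refine Finset.sum_nbij' ZMod.val (fun i => i) (fun x _ => ?_) (fun i _ => Finset.mem_univ _)
      (fun x _ => ZMod.natCast_zmod_val x) (fun i hi => ?_) (fun x _ => ?_)
    · exact Finset.mem_range.2 (two_mul n3 ▸ ZMod.val_lt x)
    · exact ZMod.val_cast_of_lt (two_mul n3 ▸ Finset.mem_range.1 hi)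
    · rw [ZMod.natCast_zmod_val]
  have hreflect : ∀ i < n3, ((n3 + (n3 - 1 - i) : ℕ) : ZMod (2 * n3)) = -1 - i := by
    intro i hi
    rw [eq_sub_iff_add_eq, eq_neg_iff_add_eq_zero, ← Nat.cast_add, ← Nat.cast_add_one,
      show n3 + (n3 - 1 - i) + i + 1 = 2 * n3 by omega, ZMod.natCast_self]
  rw [hrange, Finset.sum_range_add, ← Finset.sum_range_reflect (fun i => F (n3 + i : ℕ)),
    Finset.sum_add_distrib, Fin.sum_univ_eq_sum_range (fun i => F i),
    Fin.sum_univ_eq_sum_range (fun i => F (-1 - i))]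
  congr 1
  exact Finset.sum_congr rfl fun i hi => congrArg F (hreflect i (Finset.mem_range.1 hi))

lemma neg_one_pow_val_neg {R : Type*} [Monoid R] [HasDistribNeg R] {n3 : ℕ} [NeZero n3]
    (x : ZMod (2 * n3)) (k : ℕ) :
    (-1 : R) ^ ((-x).val + k) = (-1) ^ (x.val + k) := by
  have := ZMod.val_lt x
  rw [ZMod.neg_val]
  split_ifs with hx
  · rw [hx, ZMod.val_zero]
  · exact neg_one_pow_congr (by simp only [Nat.even_iff]; omega)

lemma neg_one_pow_val_natCast_sub {R : Type*} [Monoid R] [HasDistribNeg R] {n3 t q : ℕ}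
    (ht : t < n3) (hq : q < n3) (k : ℕ) :
    (-1 : R) ^ (((t : ZMod (2 * n3)) - q).val + k) = (-1) ^ (t - q + (q - t) + k) := by
  have : NeZero n3 := ⟨by omega⟩
  rcases le_total q t with h | h
  · rw [← Nat.cast_sub h, ZMod.val_cast_of_lt (by omega)]
    congr 2; omega
  · rw [← neg_sub, ← Nat.cast_sub h, neg_one_pow_val_neg, ZMod.val_cast_of_lt (by omega)]
    congr 2; omega

end ZMod

namespace Matrix

variable {α : Type*} [Semiring α] [StarRing α]
variable {m n p q : Type*} [Fintype m] [Fintype n] [Fintype p] [Fintype q]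

def IsMoorePenroseInverse (M : Matrix m n α) (X : Matrix n m α) : Prop :=
  M * X * M = M ∧ X * M * X = X ∧ (M * X)ᴴ = M * X ∧ (X * M)ᴴ = X * M

namespace IsMoorePenroseInverse

variable {M : Matrix m n α} {X : Matrix n m α}

lemma submatrix {m' n' : Type*} [Fintype m'] [Fintype n'] (h : IsMoorePenroseInverse M X)
    (e₁ : m' ≃ m) (e₂ : n' ≃ n) :
    IsMoorePenroseInverse (M.submatrix e₁ e₂) (X.submatrix e₂ e₁) := by
  obtain ⟨h₁, h₂, h₃, h₄⟩ := h
  refine ⟨?_, ?_, ?_, ?_⟩ <;>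
    simp only [submatrix_mul_equiv, conjTranspose_submatrix, h₁, h₂, h₃, h₄]

lemma conj_isometry [DecidableEq m] [DecidableEq n] (h : IsMoorePenroseInverse M X)
    {V : Matrix p m α} {W : Matrix q n α} (hV : Vᴴ * V = 1) (hW : Wᴴ * W = 1) :
    IsMoorePenroseInverse (V * M * Wᴴ) (W * X * Vᴴ) := by
  obtain ⟨h₁, h₂, h₃, h₄⟩ := h
  have hMX : V * M * Wᴴ * (W * X * Vᴴ) = V * (M * X) * Vᴴ := by
    simp only [Matrix.mul_assoc, ← Matrix.mul_assoc Wᴴ W, hW, Matrix.one_mul]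
  have hXM : W * X * Vᴴ * (V * M * Wᴴ) = W * (X * M) * Wᴴ := by
    simp only [Matrix.mul_assoc, ← Matrix.mul_assoc Vᴴ V, hV, Matrix.one_mul]
  refine ⟨?_, ?_, ?_, ?_⟩
  · rw [hMX]
    simp only [Matrix.mul_assoc, ← Matrix.mul_assoc Vᴴ V, hV, Matrix.one_mul]
    simp only [← Matrix.mul_assoc, h₁]
  · rw [hXM]
    simp only [Matrix.mul_assoc, ← Matrix.mul_assoc Wᴴ W, hW, Matrix.one_mul]
    simp only [← Matrix.mul_assoc, h₂]
  · rw [hMX, conjTranspose_mul, conjTranspose_mul, conjTranspose_conjTranspose, h₃]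
    simp only [Matrix.mul_assoc]
  · rw [hXM, conjTranspose_mul, conjTranspose_mul, conjTranspose_conjTranspose, h₄]
    simp only [Matrix.mul_assoc]

end IsMoorePenroseInverse

lemma isMoorePenroseInverse_fromBlocks {r r' s s' : Type*} [Fintype r] [Fintype r'] [Fintype s]
    [Fintype s'] [DecidableEq r] {S S' : Matrix r r α} {K : Matrix r r' α} {L : Matrix r s α}
    (hSS' : S * S' = 1) (hS'S : S' * S = 1) (hKL : K * Kᴴ + L * Lᴴ = 1) :
    IsMoorePenroseInverse (fromBlocks (S * K) (S * L) (0 : Matrix s' r' α) 0)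
      (fromBlocks (Kᴴ * S') 0 (Lᴴ * S') (0 : Matrix s s' α)) := by
  have hKL' : K * (Kᴴ * S') + L * (Lᴴ * S') = S' := by
    rw [← Matrix.mul_assoc, ← Matrix.mul_assoc, ← Matrix.add_mul, hKL, Matrix.one_mul]
  have hPQ : fromBlocks (S * K) (S * L) (0 : Matrix s' r' α) 0 *
      fromBlocks (Kᴴ * S') 0 (Lᴴ * S') (0 : Matrix s s' α) = fromBlocks 1 0 0 0 := by
    rw [fromBlocks_multiply]
    simp [Matrix.mul_assoc, ← Matrix.mul_add, hKL', hSS']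
  have hQP : fromBlocks (Kᴴ * S') 0 (Lᴴ * S') (0 : Matrix s s' α) *
      fromBlocks (S * K) (S * L) (0 : Matrix s' r' α) 0 =
      fromBlocks (Kᴴ * K) (Kᴴ * L) (Lᴴ * K) (Lᴴ * L) := by
    rw [fromBlocks_multiply]
    simp only [Matrix.mul_assoc, ← Matrix.mul_assoc S' S, hS'S, Matrix.one_mul, Matrix.mul_zero,
      add_zero]
  refine ⟨?_, ?_, ?_, ?_⟩
  · rw [hPQ, fromBlocks_multiply]
    simp
  · rw [hQP, fromBlocks_multiply]
    simp [Matrix.mul_assoc, ← Matrix.mul_add, hKL']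
  · rw [hPQ, fromBlocks_conjTranspose]
    simp
  · rw [hQP, fromBlocks_conjTranspose]
    simp [conjTranspose_mul]

end Matrix

namespace Tensor

open Matrix

variable {n1 n2 l n3 : ℕ}

lemma matT_add (A B : Tensor n1 n2 n3) : matT (A + B) = matT A + matT B := by
  ext p q
  simp only [matT, Matrix.add_apply, Pi.add_apply]
  split_ifs <;> ring

lemma matT_zero : matT (0 : Tensor n1 n2 n3) = 0 := by
  ext p q
  simp [matT]

lemma matT_conjT (A : Tensor n1 n2 n3) : matT (conjT A) = (matT A)ᴴ := by
  ext ⟨t, a⟩ ⟨q, b⟩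
  simp only [matT, conjT, conjTranspose_apply, star_add]
  congr 1
  · congr 3; omega
  · split_ifs <;> first | omega | simp [add_comm]

lemma matT_idT {n : ℕ} : matT (idT : Tensor n n n3) = 1 := by
  ext ⟨t, a⟩ ⟨q, b⟩
  simp only [matT, idT, one_apply]
  split_ifs <;> simp_all [Prod.ext_iff, Fin.ext_iff, one_apply] <;> omega

def finProdSumEquiv (n3 r s : ℕ) :
    Fin n3 × Fin (r + s) ≃ (Fin n3 × Fin r) ⊕ (Fin n3 × Fin s) :=
  (Equiv.prodCongr (Equiv.refl _) finSumFinEquiv.symm).trans (Equiv.prodSumDistrib _ _ _)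

lemma matT_blockT {r s t u : ℕ} (A : Tensor r t n3) (B : Tensor r u n3) (C : Tensor s t n3)
    (D : Tensor s u n3) :
    matT (blockT A B C D) = (fromBlocks (matT A) (matT B) (matT C) (matT D)).submatrix
      (finProdSumEquiv n3 r s) (finProdSumEquiv n3 t u) := by
  ext ⟨i, x⟩ ⟨j, y⟩
  rcases hx : finSumFinEquiv.symm x with a | a <;> rcases hy : finSumFinEquiv.symm y with b | b <;>
    simp only [matT, blockT, submatrix_apply, finProdSumEquiv, Equiv.trans_apply,
      Equiv.prodCongr_apply, Equiv.coe_refl, Prod.map, id_eq, hx, hy,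
      Equiv.prodSumDistrib_apply_left, Equiv.prodSumDistrib_apply_right, reindex_apply, fromBlocks,
      of_apply, Sum.elim_inl, Sum.elim_inr]

def foldedSlice (A : Tensor n1 n2 n3) (e : ℕ) : Matrix (Fin n1) (Fin n2) ℂ :=
  if h : e < n3 then A ⟨e, h⟩
  else if h' : n3 < e ∧ e < 2 * n3 then A ⟨2 * n3 - e, by omega⟩ else 0

def circKernel (A : Tensor n1 n2 n3) (x : ZMod (2 * n3)) : Matrix (Fin n1) (Fin n2) ℂ :=
  foldedSlice A x.val

def toeplitzHankel (h : ZMod (2 * n3) → Matrix (Fin n1) (Fin n2) ℂ) :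
    Matrix (Fin n3 × Fin n1) (Fin n3 × Fin n2) ℂ :=
  of fun p q => h ((p.1 : ℕ) - (q.1 : ℕ)) p.2 q.2 + h ((p.1 : ℕ) + (q.1 : ℕ) + 1) p.2 q.2

lemma foldedSlice_two_mul_sub (A : Tensor n1 n2 n3) {e : ℕ} (he₀ : 0 < e) (he : e < 2 * n3) :
    foldedSlice A (2 * n3 - e) = foldedSlice A e := by
  unfold foldedSlice
  split_ifs <;> first | omega | rfl | (congr 1; ext; simp only; omega)

lemma circKernel_neg [NeZero n3] (A : Tensor n1 n2 n3) (x : ZMod (2 * n3)) :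
    circKernel A (-x) = circKernel A x := by
  by_cases hx : x = 0
  · rw [hx, neg_zero]
  · rw [circKernel, circKernel, ZMod.neg_val, if_neg hx,
      foldedSlice_two_mul_sub A (ZMod.val_pos.2 hx) (ZMod.val_lt x)]

lemma circKernel_natCast (A : Tensor n1 n2 n3) {e : ℕ} (he : e < 2 * n3) :
    circKernel A e = foldedSlice A e := by
  rw [circKernel, ZMod.val_cast_of_lt he]

lemma circKernel_natCast_sub (A : Tensor n1 n2 n3) {t q : ℕ} (ht : t < n3) (hq : q < n3) :
    circKernel A ((t : ZMod (2 * n3)) - q) = A ⟨t - q + (q - t), by omega⟩ := by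
  have : NeZero n3 := ⟨by omega⟩
  rcases le_total q t with h | h
  · rw [← Nat.cast_sub h, circKernel_natCast A (by omega), foldedSlice, dif_pos (by omega)]
    congr 1; ext; simp only; omega
  · rw [← neg_sub, ← Nat.cast_sub h, circKernel_neg, circKernel_natCast A (by omega),
      foldedSlice, dif_pos (by omega)]
    congr 1; ext; simp only; omega

lemma matT_eq_toeplitzHankel (A : Tensor n1 n2 n3) :
    matT A = toeplitzHankel (circKernel A) := by
  ext ⟨t, a⟩ ⟨q, b⟩
  have ht := t.isLt
  have hq := q.isLt
  simp only [matT, toeplitzHankel, of_apply, circKernel_natCast_sub A ht hq]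
  congr 1
  rw [← Nat.cast_add, ← Nat.cast_add_one, circKernel_natCast A (by omega), foldedSlice]
  split_ifs <;> first | omega | rfl

def circConv [NeZero n3] (h : ZMod (2 * n3) → Matrix (Fin n1) (Fin n2) ℂ)
    (h' : ZMod (2 * n3) → Matrix (Fin n2) (Fin l) ℂ) (x : ZMod (2 * n3)) :
    Matrix (Fin n1) (Fin l) ℂ :=
  ∑ y, h (x - y) * h' y

lemma toeplitzHankel_mul [NeZero n3] (h : ZMod (2 * n3) → Matrix (Fin n1) (Fin n2) ℂ)
    (h' : ZMod (2 * n3) → Matrix (Fin n2) (Fin l) ℂ) (hh' : ∀ x, h' (-x) = h' x) :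
    toeplitzHankel h * toeplitzHankel h' = toeplitzHankel (circConv h h') := by
  ext ⟨t, a⟩ ⟨q, b⟩
  set T : ZMod (2 * n3) := ((t : ℕ) : ZMod (2 * n3))
  set Q : ZMod (2 * n3) := ((q : ℕ) : ZMod (2 * n3))
  set f : ZMod (2 * n3) → Matrix (Fin n2) (Fin l) ℂ := fun x => h' (x - Q) + h' (x + Q + 1)
  have hf : ∀ x, f (-1 - x) = f x := fun x => by
    simp only [f]
    rw [show -1 - x - Q = -(x + Q + 1) by ring, show -1 - x + Q + 1 = -(x - Q) by ring, hh', hh',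
      add_comm]
  -- `u ↦ -1 - u` carries the Hankel half of the sum onto the other half of `ZMod (2 * n3)`
  have hfold : ∑ u : Fin n3, (h (T - (u : ℕ)) + h (T + (u : ℕ) + 1)) * f (u : ℕ) =
      ∑ x, h (T - x) * f x := by
    rw [ZMod.sum_two_mul_eq_sum_fin]
    refine Finset.sum_congr rfl fun u _ => ?_
    rw [hf, show T - (-1 - ((u : ℕ) : ZMod (2 * n3))) = T + (u : ℕ) + 1 by ring, Matrix.add_mul]
  have hshift : ∀ c : ZMod (2 * n3), ∑ x, h (T - x) * h' (x + c) = circConv h h' (T + c) :=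
    fun c => Fintype.sum_equiv (Equiv.addRight c) _ (fun y => h (T + c - y) * h' y) fun x => by
      rw [Equiv.coe_addRight, add_sub_add_right_eq_sub]
  calc (toeplitzHankel h * toeplitzHankel h') (t, a) (q, b)
      = (∑ u : Fin n3, (h (T - (u : ℕ)) + h (T + (u : ℕ) + 1)) * f (u : ℕ)) a b := by
        simp only [mul_apply, Fintype.sum_prod_type, Matrix.sum_apply, toeplitzHankel, of_apply,
          f, Matrix.add_apply]
        rfl
    _ = circConv h h' (T - Q) a b + circConv h h' (T + Q + 1) a b := by
        rw [hfold, sub_eq_add_neg T Q, add_assoc T Q 1, ← hshift, ← hshift,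
          ← Matrix.add_apply, ← Finset.sum_add_distrib]
        simp only [f, Matrix.mul_add, sub_eq_add_neg, add_assoc]

lemma circConv_neg [NeZero n3] {h : ZMod (2 * n3) → Matrix (Fin n1) (Fin n2) ℂ}
    {h' : ZMod (2 * n3) → Matrix (Fin n2) (Fin l) ℂ} (hh : ∀ x, h (-x) = h x)
    (hh' : ∀ x, h' (-x) = h' x) (x : ZMod (2 * n3)) :
    circConv h h' (-x) = circConv h h' x :=
  Fintype.sum_equiv (Equiv.neg _) _ _ fun y => by
    rw [Equiv.neg_apply, hh', ← hh, neg_sub, sub_neg_eq_add, sub_eq_add_neg, neg_neg, add_comm]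

lemma toeplitzHankel_sub (h g : ZMod (2 * n3) → Matrix (Fin n1) (Fin n2) ℂ) :
    toeplitzHankel (h - g) = toeplitzHankel h - toeplitzHankel g := by
  ext p q
  simp only [toeplitzHankel, of_apply, Pi.sub_apply, Matrix.sub_apply]
  abel

lemma toeplitzHankel_neg_one_pow_smul (c : Matrix (Fin n1) (Fin n2) ℂ) :
    toeplitzHankel (fun x : ZMod (2 * n3) => (-1 : ℂ) ^ (x.val + n3) • c) = 0 := by
  ext ⟨t, a⟩ ⟨q, b⟩
  have ht := t.isLt
  have hq := q.isLt
  simp only [toeplitzHankel, of_apply, Matrix.zero_apply, Matrix.smul_apply, smul_eq_mul]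
  rw [ZMod.neg_one_pow_val_natCast_sub ht hq, ← Nat.cast_add, ← Nat.cast_add_one,
    ZMod.val_cast_of_lt (by omega),
    neg_one_pow_eq_neg_of_odd_add (a := t + q + 1 + n3) (b := t - q + (q - t) + n3) (by omega)]
  ring

lemma circKernel_eq_of_even [NeZero n3] {h : ZMod (2 * n3) → Matrix (Fin n1) (Fin n2) ℂ}
    (hh : ∀ x, h (-x) = h x) (hn3 : h n3 = 0) :
    circKernel (fun m : Fin n3 => h (m : ℕ)) = h := by
  funext x
  have hx := ZMod.val_lt x
  unfold circKernel foldedSlice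
  split_ifs with h₁ h₂
  · exact congrArg h (ZMod.natCast_zmod_val x)
  · show h ((2 * n3 - x.val : ℕ)) = h x
    rw [Nat.cast_sub h₂.2.le, ZMod.natCast_self, zero_sub, ZMod.natCast_zmod_val, hh]
  · rw [← ZMod.natCast_zmod_val x, show x.val = n3 by omega, hn3]

lemma exists_matT_eq_toeplitzHankel [NeZero n3]
    {h : ZMod (2 * n3) → Matrix (Fin n1) (Fin n2) ℂ} (hh : ∀ x, h (-x) = h x) :
    ∃ D : Tensor n1 n2 n3, matT D = toeplitzHankel h := by
  set alt : ZMod (2 * n3) → Matrix (Fin n1) (Fin n2) ℂ :=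
    fun x => (-1 : ℂ) ^ (x.val + n3) • h n3
  have halt : ∀ x, alt (-x) = alt x := fun x => by simp only [alt, ZMod.neg_one_pow_val_neg]
  have halt_n3 : alt n3 = h n3 := by
    simp only [alt, ZMod.val_cast_of_lt (show n3 < 2 * n3 by have := NeZero.pos n3; omega),
      Even.neg_one_pow ⟨n3, rfl⟩, one_smul]
  refine ⟨fun m => (h - alt) (m : ℕ), ?_⟩
  have hdiff : ∀ x, (h - alt) (-x) = (h - alt) x := fun x => by
    simp only [Pi.sub_apply, hh, halt]
  rw [matT_eq_toeplitzHankel, circKernel_eq_of_even hdiff (by rw [Pi.sub_apply, halt_n3, sub_self]),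
    toeplitzHankel_sub, toeplitzHankel_neg_one_pow_smul, sub_zero]

lemma tenT_matT (A : Tensor n1 n2 n3) : tenT (matT A) = A := by
  funext i
  ext a b
  set g : ℕ → ℂ := fun s => if h : s < n3 then A ⟨s, h⟩ a b else 0
  have hcol : ∀ t : Fin n3, matT A (t, a) (⟨0, i.pos⟩, b) = g t + g (t + 1) := fun t => by
    have := t.isLt
    simp only [matT, g, Nat.sub_zero, Nat.zero_sub, add_zero]
    split_ifs <;> first | omega | rfl
  set f : ℕ → ℂ := fun k => (-1) ^ k * g (i + k)
  calc tenT (matT A) i a b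
      = ∑ t ∈ Finset.range n3,
          if (i : ℕ) ≤ t then (-1) ^ (t - i) * (g t + g (t + 1)) else 0 := by
        simp only [tenT, of_apply, hcol]
        exact Fin.sum_univ_eq_sum_range
          (fun t => if (i : ℕ) ≤ t then (-1) ^ (t - i) * (g t + g (t + 1)) else 0) n3
    _ = ∑ k ∈ Finset.range (n3 - i), (f k - f (k + 1)) := by
        rw [← Finset.sum_filter, Finset.range_eq_Ico, Finset.Ico_filter_le, Nat.zero_max,
          Finset.sum_Ico_eq_sum_range]
        refine Finset.sum_congr rfl fun k _ => ?_
        simp only [f, Nat.add_sub_cancel_left, pow_succ, ← add_assoc]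
        ring
    _ = A i a b := by
        rw [Finset.sum_range_sub']
        simp [f, g, show (i : ℕ) + (n3 - i) = n3 by omega]

lemma matT_injective : Function.Injective (matT : Tensor n1 n2 n3 → _) :=
  Function.LeftInverse.injective tenT_matT

lemma matT_cmul (A : Tensor n1 n2 n3) (B : Tensor n2 l n3) :
    matT (cmul A B) = matT A * matT B := by
  rcases Nat.eq_zero_or_pos n3 with rfl | hn
  · ext ⟨t, _⟩
    exact t.elim0
  have : NeZero n3 := ⟨hn.ne'⟩
  obtain ⟨D, hD⟩ :=
    exists_matT_eq_toeplitzHankel (circConv_neg (circKernel_neg A) (circKernel_neg B))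
  have hprod : matT A * matT B = matT D := by
    rw [matT_eq_toeplitzHankel, matT_eq_toeplitzHankel, toeplitzHankel_mul _ _ (circKernel_neg B),
      hD]
  rw [cmul, hprod, tenT_matT]

lemma isMP_iff_isMoorePenroseInverse_matT (A : Tensor n1 n2 n3)
    (X : Tensor n2 n1 n3) : IsMP A X ↔ (matT A).IsMoorePenroseInverse (matT X) := by
  simp only [IsMP, Matrix.IsMoorePenroseInverse, ← matT_cmul, ← matT_conjT,
    matT_injective.eq_iff]

end Tensor

open Tensor
open scoped Matrix

theorem stmt9 {r s n3 : ℕ} (A U : Tensor (r + s) (r + s) n3)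
    (Sr Si K : Tensor r r n3) (L : Tensor r s n3)
    (hU : Unitary U) (hSi : IsInverse Sr Si)
    (hKL : cmul K (conjT K) + cmul L (conjT L) = idT)
    (hA : A = cmul (cmul U (blockT (cmul Sr K) (cmul Sr L) 0 0)) (conjT U)) :
    IsMP A (cmul (cmul U (blockT (cmul (conjT K) Si) 0 (cmul (conjT L) Si) 0)) (conjT U)) := by
  have hU' : (matT U)ᴴ * matT U = 1 := by rw [← matT_conjT, ← matT_cmul, hU.1, matT_idT]
  have hS : matT Sr * matT Si = 1 := by rw [← matT_cmul, hSi.1, matT_idT]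
  have hS' : matT Si * matT Sr = 1 := by rw [← matT_cmul, hSi.2, matT_idT]
  have hKL' : matT K * (matT K)ᴴ + matT L * (matT L)ᴴ = 1 := by
    rw [← matT_conjT, ← matT_conjT, ← matT_cmul, ← matT_cmul, ← matT_add, hKL, matT_idT]
  rw [isMP_iff_isMoorePenroseInverse_matT, hA]
  simp only [matT_cmul, matT_conjT, matT_blockT, matT_zero]
  exact ((Matrix.isMoorePenroseInverse_fromBlocks hS hS' hKL').submatrix _ _).conj_isometry hU' hU'
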